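/- arXiv:2107.10570 — 4 statements merged into one kernel-verified Lean document; each statement's English description precedes it below -/
import Mathlib

section
/- Let (K,v) be an algebraically closed valued field, E = {z_ν}_{ν<λ} a pseudo monotone sequence in (K,v) with δ_ν strictly monotone (pcs or pds case), and f ∈ K[X] a nonzero polynomial. Write f(X) = c·(X - a₁)···(X - a_n) with a₁,…,a_j exactly the roots of f that are limits of E. Then there is β ∈ v(K^×) such that v(f(z_ν)) = j·δ_ν + β for all ν sufficiently large. Consequently, the sequence {v(f(z_ν))}_{ν<λ} is ultimately constant if and only if no root of f is a limit of E. -/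
/-!
Over an algebraically closed field, `f(z_ν) = c · ∏ (z_ν - a)` over the roots `a` of `f`, so
`v(f(z_ν))` is `v(c)` plus the sum of the values `v(z_ν - a)`. Each of these is ultimately
`δ_ν` when `a` is a limit of the sequence and ultimately constant (and finite) otherwise:
by the ultrametric inequality, as soon as `v(a - z_ν)` falls strictly below the value
`v(z_ν - z_μ)` of a later step, it stays frozen. Since `δ` is injective and the index set has
no last element, `j • δ_ν + β` is not ultimately constant unless `j = 0`.
-/

open Set

open scoped Classical

def Ultimately (lam : Ordinal) (p : Ordinal → Prop) : Prop :=
  ∃ ν₀ < lam, ∀ ν, ν₀ ≤ ν → ν < lam → p ν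

namespace Ultimately

variable {lam : Ordinal} {p q : Ordinal → Prop}

theorem of_forall (hlam : 0 < lam) (h : ∀ ν < lam, p ν) : Ultimately lam p :=
  ⟨0, hlam, fun ν _ hν => h ν hν⟩

theorem mono (hp : Ultimately lam p) (h : ∀ ν < lam, p ν → q ν) : Ultimately lam q :=
  let ⟨ν₀, hν₀, hp⟩ := hp
  ⟨ν₀, hν₀, fun ν hle hν => h ν hν (hp ν hle hν)⟩

theorem and (hp : Ultimately lam p) (hq : Ultimately lam q) :
    Ultimately lam fun ν => p ν ∧ q ν :=
  let ⟨ν₁, hν₁, hp⟩ := hp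
  let ⟨ν₂, hν₂, hq⟩ := hq
  ⟨max ν₁ ν₂, max_lt hν₁ hν₂, fun ν hle hν =>
    ⟨hp ν ((le_max_left _ _).trans hle) hν, hq ν ((le_max_right _ _).trans hle) hν⟩⟩

end Ultimately

theorem not_ultimately_eq_of_injOn {α : Type*} {lam : Ordinal} (hlam : Order.IsSuccLimit lam)
    {g : Ordinal → α} (hg : InjOn g (Iio lam)) (γ : α) : ¬ Ultimately lam fun ν => g ν = γ := by
  rintro ⟨ν₀, hν₀, h⟩
  have hsucc := hlam.succ_lt hν₀
  have : ν₀ = Order.succ ν₀ :=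
    hg hν₀ hsucc ((h ν₀ le_rfl hν₀).trans (h _ (Order.le_succ ν₀) hsucc).symm)
  exact (Order.lt_succ ν₀).ne this

theorem WithTop.nsmul_right_injective {Γ : Type*} [AddCommGroup Γ] [LinearOrder Γ]
    [IsOrderedAddMonoid Γ] {n : ℕ} (hn : n ≠ 0) :
    Function.Injective fun x : WithTop Γ => n • x := by
  have htop : n • (⊤ : WithTop Γ) = ⊤ := by
    obtain ⟨k, rfl⟩ := Nat.exists_eq_add_one_of_ne_zero hn
    rw [succ_nsmul, WithTop.add_top]
  intro x y h
  induction x using WithTop.recTopCoe <;> induction y using WithTop.recTopCoe <;>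
    simp only [htop, ← WithTop.coe_nsmul, WithTop.coe_ne_top, WithTop.top_ne_coe] at h
  · rfl
  · exact congrArg _ (_root_.nsmul_right_injective hn (WithTop.coe_inj.1 h))

theorem AddValuation.map_sub_eq_of_lt_map_sub {R Γ₀ : Type*} [Ring R]
    [LinearOrderedAddCommMonoidWithTop Γ₀] (v : AddValuation R Γ₀) {a b c : R}
    (h : v (a - b) < v (b - c)) : v (a - c) = v (a - b) := by
  rw [← sub_add_sub_cancel a b c]
  exact v.map_add_eq_of_lt_left h

section PseudoMonotone

variable {K Γ : Type*} [CommRing K] [AddCommGroup Γ] [LinearOrder Γ] [IsOrderedAddMonoid Γ]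
  (v : AddValuation K (WithTop Γ)) (lam : Ordinal) (z : Ordinal → K) (δ : Ordinal → WithTop Γ)

def IsPseudoLimit (a : K) : Prop :=
  Ultimately lam fun ν => v (a - z ν) = δ ν

variable {v lam z δ}

theorem isPseudoLimit_or_ultimately_eq_of_strictMonoOn (hlam : Order.IsSuccLimit lam)
    (hrep : ∀ ν μ, ν < μ → μ < lam → v (z ν - z μ) = min (δ ν) (δ μ))
    (hδ : StrictMonoOn δ (Iio lam)) (a : K) :
    IsPseudoLimit v lam z δ a ∨ ∃ c ≠ 0, Ultimately lam fun ν => v (z ν - a) = v c := by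
  by_cases hle : ∀ ν < lam, δ ν ≤ v (a - z ν)
  · refine .inl <| .of_forall hlam.bot_lt fun ν hν => ?_
    have hsucc := hlam.succ_lt hν
    have hstep : v (z ν - z (Order.succ ν)) = δ ν := by
      rw [hrep _ _ (Order.lt_succ ν) hsucc, min_eq_left (hδ hν hsucc (Order.lt_succ ν)).le]
    have hlt : v (z ν - z (Order.succ ν)) < v (z (Order.succ ν) - a) := by
      rw [hstep, v.map_sub_swap]
      exact (hδ hν hsucc (Order.lt_succ ν)).trans_le (hle _ hsucc)
    rw [v.map_sub_swap, v.map_sub_eq_of_lt_map_sub hlt, hstep]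
  · push Not at hle
    obtain ⟨ν₁, hν₁, hlt⟩ := hle
    refine .inr ⟨a - z ν₁, fun h => by simp [h] at hlt, ν₁, hν₁, fun ν hle hν => ?_⟩
    rcases hle.eq_or_lt with rfl | hlt'
    · exact v.map_sub_swap _ _
    · have hstep : v (z ν₁ - z ν) = δ ν₁ := by
        rw [hrep _ _ hlt' hν, min_eq_left (hδ hν₁ hν hlt').le]
      rw [v.map_sub_swap, v.map_sub_eq_of_lt_map_sub (hstep ▸ hlt)]

theorem isPseudoLimit_or_ultimately_eq_of_strictAntiOn (hlam : Order.IsSuccLimit lam)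
    (hrep : ∀ ν μ, ν < μ → μ < lam → v (z ν - z μ) = min (δ ν) (δ μ))
    (hδ : StrictAntiOn δ (Iio lam)) (a : K) :
    IsPseudoLimit v lam z δ a ∨ ∃ c ≠ 0, Ultimately lam fun ν => v (z ν - a) = v c := by
  have hstep : ∀ ν μ, ν < μ → μ < lam → v (z ν - z μ) = δ μ := fun ν μ h hμ => by
    rw [hrep _ _ h hμ, min_eq_right (hδ (h.trans hμ) hμ h).le]
  by_cases hfar : ∃ ν₁ < lam, ∀ μ, ν₁ < μ → μ < lam → δ μ < v (a - z ν₁)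
  · obtain ⟨ν₁, hν₁, hgt⟩ := hfar
    refine .inl ⟨Order.succ ν₁, hlam.succ_lt hν₁, fun ν hle hν => ?_⟩
    have hν₁ν : ν₁ < ν := Order.succ_le_iff.1 hle
    have hlt : v (z ν - z ν₁) < v (z ν₁ - a) := by
      rw [v.map_sub_swap, hstep _ _ hν₁ν hν, v.map_sub_swap]
      exact hgt ν hν₁ν hν
    change v (a - z ν) = δ ν
    rw [v.map_sub_swap, v.map_sub_eq_of_lt_map_sub hlt, v.map_sub_swap, hstep _ _ hν₁ν hν]
  · push Not at hfar
    have hbelow : ∀ ν < lam, v (a - z ν) < δ ν := fun ν hν => by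
      obtain ⟨μ, hνμ, hμ, hle⟩ := hfar ν hν
      exact hle.trans_lt (hδ hν hμ hνμ)
    have h0 : (0 : Ordinal) < lam := hlam.bot_lt
    refine .inr ⟨a - z 0, fun h => by simpa [h] using hbelow 0 h0, .of_forall h0 fun ν hν => ?_⟩
    rcases (zero_le (a := ν)).eq_or_lt with rfl | hpos
    · exact v.map_sub_swap _ _
    · have hlt : v (a - z ν) < v (z ν - z 0) := by
        rw [v.map_sub_swap (z ν), hstep _ _ hpos hν]
        exact hbelow ν hν
      rw [v.map_sub_swap, v.map_sub_eq_of_lt_map_sub hlt]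

theorem isPseudoLimit_or_ultimately_eq (hlam : Order.IsSuccLimit lam)
    (hrep : ∀ ν μ, ν < μ → μ < lam → v (z ν - z μ) = min (δ ν) (δ μ))
    (hδ : StrictMonoOn δ (Iio lam) ∨ StrictAntiOn δ (Iio lam)) (a : K) :
    IsPseudoLimit v lam z δ a ∨ ∃ c ≠ 0, Ultimately lam fun ν => v (z ν - a) = v c :=
  hδ.elim (isPseudoLimit_or_ultimately_eq_of_strictMonoOn hlam hrep · a)
    (isPseudoLimit_or_ultimately_eq_of_strictAntiOn hlam hrep · a)

theorem not_isPseudoLimit_of_ultimately_eq (hlam : Order.IsSuccLimit lam)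
    (hδ : InjOn δ (Iio lam)) {a : K} {γ : WithTop Γ}
    (h : Ultimately lam fun ν => v (z ν - a) = γ) : ¬ IsPseudoLimit v lam z δ a := fun hlim =>
  not_ultimately_eq_of_injOn hlam hδ γ <|
    (hlim.and h).mono fun _ _ ⟨hlim, h⟩ => by rwa [← hlim, v.map_sub_swap]

variable [IsDomain K]

theorem exists_ultimately_map_prod_sub_eq (hlam : Order.IsSuccLimit lam)
    (hrep : ∀ ν μ, ν < μ → μ < lam → v (z ν - z μ) = min (δ ν) (δ μ))
    (hδ : StrictMonoOn δ (Iio lam) ∨ StrictAntiOn δ (Iio lam)) (s : Multiset K) :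
    ∃ c ≠ 0, Ultimately lam fun ν =>
      v (s.map (z ν - ·)).prod = Multiset.card (s.filter (IsPseudoLimit v lam z δ)) • δ ν + v c := by
  induction s using Multiset.induction with
  | empty => exact ⟨1, one_ne_zero, .of_forall hlam.bot_lt fun _ _ => by simp⟩
  | cons a s ih =>
    obtain ⟨c, hc, hs⟩ := ih
    rcases isPseudoLimit_or_ultimately_eq hlam hrep hδ a with hlim | ⟨c₁, hc₁, hconst⟩
    · refine ⟨c, hc, (hs.and hlim).mono fun ν _ ⟨hsν, haν⟩ => ?_⟩
      rw [Multiset.map_cons, Multiset.prod_cons, v.map_mul, hsν, Multiset.filter_cons_of_pos _ hlim,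
        Multiset.card_cons, v.map_sub_swap, haν, succ_nsmul]
      abel
    · have hnlim := not_isPseudoLimit_of_ultimately_eq hlam
        (hδ.elim StrictMonoOn.injOn StrictAntiOn.injOn) hconst
      refine ⟨c₁ * c, mul_ne_zero hc₁ hc, (hs.and hconst).mono fun ν _ ⟨hsν, haν⟩ => ?_⟩
      rw [Multiset.map_cons, Multiset.prod_cons, v.map_mul, hsν,
        Multiset.filter_cons_of_neg _ hnlim, haν, v.map_mul]
      abel

theorem exists_ultimately_map_eval_eq (hlam : Order.IsSuccLimit lam)
    (hrep : ∀ ν μ, ν < μ → μ < lam → v (z ν - z μ) = min (δ ν) (δ μ))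
    (hδ : StrictMonoOn δ (Iio lam) ∨ StrictAntiOn δ (Iio lam)) {f : Polynomial K}
    (hf : f ≠ 0) (hsplit : f.Splits) :
    ∃ c ≠ 0, Ultimately lam fun ν =>
      v (f.eval (z ν)) = Multiset.card (f.roots.filter (IsPseudoLimit v lam z δ)) • δ ν + v c := by
  obtain ⟨c, hc, hprod⟩ := exists_ultimately_map_prod_sub_eq hlam hrep hδ f.roots
  refine ⟨f.leadingCoeff * c, mul_ne_zero (Polynomial.leadingCoeff_ne_zero.2 hf) hc,
    hprod.mono fun ν _ hprod => ?_⟩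
  rw [hsplit.eval_eq_prod_roots, v.map_mul, hprod, v.map_mul]
  abel

end PseudoMonotone

/-- for an algebraically closed valued field `(K,v)`, a pcs or pds `E`
(with strictly monotone value sequence `δ`, `v(z_ν - z_μ) = min(δ_ν, δ_μ)` for `ν < μ`)
and a nonzero polynomial `f`, with `j` the number of roots of `f` (with multiplicity)
that are limits of `E`, there is `β ∈ v(K^×)` with `v(f(z_ν)) = j•δ_ν + β` ultimately.
Consequently `{v(f(z_ν))}` is ultimately constant iff no root of `f` is a limit of `E`. -/
theorem stmt11 {K : Type*} [Field K] [IsAlgClosed K]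
    {Γ : Type*} [AddCommGroup Γ] [LinearOrder Γ] [IsOrderedAddMonoid Γ]
    (v : AddValuation K (WithTop Γ)) (lam : Ordinal) (hlam : Order.IsSuccLimit lam)
    (z : Ordinal → K) (δ : Ordinal → WithTop Γ)
    (hrep : ∀ ν μ : Ordinal, ν < μ → μ < lam → v (z ν - z μ) = min (δ ν) (δ μ))
    (hmono : (∀ ν μ : Ordinal, ν < μ → μ < lam → δ ν < δ μ) ∨
             (∀ ν μ : Ordinal, ν < μ → μ < lam → δ μ < δ ν))
    (f : Polynomial K) (hf : f ≠ 0) :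
    (∃ β : WithTop Γ, (∃ c : K, c ≠ 0 ∧ v c = β) ∧
      ∃ ν₀, ν₀ < lam ∧ ∀ ν, ν₀ ≤ ν → ν < lam →
        v (f.eval (z ν)) =
          (Multiset.card (f.roots.filter fun a =>
            ∃ ν₀, ν₀ < lam ∧ ∀ ν, ν₀ ≤ ν → ν < lam → v (a - z ν) = δ ν)) • δ ν + β) ∧
    ((∃ γ : WithTop Γ, ∃ ν₀, ν₀ < lam ∧ ∀ ν, ν₀ ≤ ν → ν < lam →
        v (f.eval (z ν)) = γ) ↔
      ∀ a ∈ f.roots,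
        ¬ ∃ ν₀, ν₀ < lam ∧ ∀ ν, ν₀ ≤ ν → ν < lam → v (a - z ν) = δ ν) := by
  have hδ : StrictMonoOn δ (Iio lam) ∨ StrictAntiOn δ (Iio lam) :=
    hmono.imp (fun h _ _ _ hμ hνμ => h _ _ hνμ hμ) (fun h _ _ _ hμ hνμ => h _ _ hνμ hμ)
  obtain ⟨c, hc, hval⟩ := exists_ultimately_map_eval_eq hlam hrep hδ hf (IsAlgClosed.splits f)
  refine ⟨⟨v c, ⟨c, hc, rfl⟩, hval⟩, ⟨?_, fun hnone => ?_⟩⟩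
  · rintro ⟨γ, hγ⟩ a ha hlim
    set j := Multiset.card (f.roots.filter (IsPseudoLimit v lam z δ))
    have hj : j ≠ 0 :=
      (Multiset.card_pos_iff_exists_mem.2 ⟨a, Multiset.mem_filter.2 ⟨ha, hlim⟩⟩).ne'
    have hinj : InjOn (fun ν => j • δ ν + v c) (Iio lam) :=
      (Function.Injective.comp (fun _ _ => WithTop.add_right_cancel (v.ne_top_iff.2 hc))
        (WithTop.nsmul_right_injective hj)).comp_injOn
        (hδ.elim StrictMonoOn.injOn StrictAntiOn.injOn)
    exact not_ultimately_eq_of_injOn hlam hinj γ <|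
      (Ultimately.and hval hγ).mono fun _ _ ⟨hval, hγ⟩ => hval ▸ hγ
  · rw [Multiset.filter_eq_nil (s := f.roots) (p := IsPseudoLimit v lam z δ) |>.2 hnone] at hval
    exact ⟨v c, hval.mono fun _ _ h => by simpa using h⟩
end

section
/- Let (K,v) be a valued field, E a pseudo monotone sequence in (K,v), and define V_E := { φ ∈ K(X) : v(φ(z_ν)) ≥ 0 for all ν sufficiently large } with maximal ideal M_E := { φ : v(φ(z_ν)) > 0 for all ν sufficiently large }, a valuation ring of K(X) with valuation v_E. Then for φ ∈ K(X): the sequence {v(φ(z_ν))}_{ν<λ} is ultimately constant if and only if v_E(φ) ∈ v(K^×); and in that case v_E(φ) = β where v(φ(z_ν)) = β for all sufficiently large ν. -/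
/-!
Multiplying `ψ` by a constant `c⁻¹` turns the defining properties of `V_E` and `M_E` into:
`v c ≤ v_E ψ` (resp. `<`) iff `v c ≤ v (ψ (z_ν))` (resp. `<`) ultimately. If `v (φ (z_ν))` is
ultimately `β = v (φ (z_ν₀))`, the first gives `β ≤ v_E φ` and the second rules out `β < v_E φ`.
Conversely, if `v_E φ = v c`, the `≤` version applied to `φ` and to `φ⁻¹` squeezes `v (φ (z_ν))`
to `v c`, provided `φ (z_ν) ≠ 0` ultimately. That holds because a pseudo monotone sequence is
either constant or injective on `(0, λ)`: in the first case `φ (z_ν) = 0` throughout would put both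
`φ` and `φ⁻¹` in `M_E`, in the second `φ` has only finitely many zeros.
-/

open Filter
open scoped Polynomial

universe u

/-- Coprimality forces `b = 0 ↔ d = 0`, so the junk value `x / 0 = 0` agrees on both sides. -/
theorem div_eq_div_of_isCoprime {L : Type*} [Field L] {a b c d : L} (hab : IsCoprime a b)
    (hcd : IsCoprime c d) (h : a * d = c * b) : a / b = c / d := by
  rcases eq_or_ne b 0 with rfl | hb
  · have ha : a ≠ 0 := by rintro rfl; exact not_isCoprime_zero_zero hab
    have hd : d = 0 := by simpa [ha] using h
    simp [hd]
  rcases eq_or_ne d 0 with rfl | hd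
  · have hc : c ≠ 0 := by rintro rfl; exact not_isCoprime_zero_zero hcd
    simp [hc, hb] at h
  exact (div_eq_div_iff hb hd).2 h

theorem Set.injOn_of_lt_imp_ne {α β : Type*} [LinearOrder α] {f : α → β} {s : Set α}
    (h : ∀ a ∈ s, ∀ b ∈ s, a < b → f a ≠ f b) : Set.InjOn f s := by
  intro a ha b hb hab
  by_contra hne
  rcases lt_or_gt_of_ne hne with hlt | hlt
  · exact h a ha b hb hlt hab
  · exact h b hb a ha hlt hab.symm

namespace RatFunc

variable {K L : Type u} [Field K] [Field L] {f : K →+* L} {a : L}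

theorem eval_eq_div_of_isCoprime {x : RatFunc K} {p q : K[X]} (hpq : IsCoprime p q)
    (hq : q ≠ 0) (hx : x = algebraMap _ _ p / algebraMap _ _ q) :
    x.eval f a = p.eval₂ f a / q.eval₂ f a := by
  have h := congrArg (Polynomial.eval₂ f a) ((num_mul_eq_mul_denom_iff hq).2 hx)
  simp only [Polynomial.eval₂_mul] at h
  exact div_eq_div_of_isCoprime ((isCoprime_num_denom x).map (Polynomial.eval₂RingHom f a))
    (hpq.map (Polynomial.eval₂RingHom f a)) h

theorem eval_C_mul (c : K) (x : RatFunc K) : (C c * x).eval f a = f c * x.eval f a := by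
  rcases eq_or_ne c 0 with rfl | hc
  · simp
  rw [eval_eq_div_of_isCoprime (p := Polynomial.C c * x.num) (q := x.denom)
      ((isCoprime_mul_unit_left_left (Polynomial.isUnit_C.2 hc.isUnit) _ _).2
        (isCoprime_num_denom x)) x.denom_ne_zero,
    Polynomial.eval₂_mul, Polynomial.eval₂_C, mul_div_assoc]
  · rfl
  · rw [map_mul, mul_div_assoc, num_div_denom, algebraMap_C]

theorem eval_inv (x : RatFunc K) : x⁻¹.eval f a = (x.eval f a)⁻¹ := by
  rcases eq_or_ne x 0 with rfl | hx
  · simp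
  rw [eval_eq_div_of_isCoprime (isCoprime_num_denom x).symm (num_ne_zero hx), eval, inv_div]
  rw [← inv_div, num_div_denom]

theorem finite_setOf_eval_eq_zero {x : RatFunc K} (hx : x ≠ 0) :
    {a | x.eval f a = 0}.Finite := by
  refine (Polynomial.finite_setOfPred_isRoot (p := (x.num * x.denom).map f) ?_).subset
    fun a ha => ?_
  · exact (Polynomial.map_ne_zero_iff f.injective).2
      (mul_ne_zero (num_ne_zero hx) x.denom_ne_zero)
  · simpa [eval, Polynomial.eval_map, Polynomial.eval₂_mul] using ha

end RatFunc

namespace AddValuation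

variable {Γ : Type*} [AddCommGroup Γ] [LinearOrder Γ] [IsOrderedAddMonoid Γ]
  {L : Type*} [Field L] (w : AddValuation L (WithTop Γ))

theorem map_mul_le_map_mul_iff {c : L} (hc : c ≠ 0) (x y : L) :
    w (c * x) ≤ w (c * y) ↔ w x ≤ w y := by
  rw [w.map_mul, w.map_mul, WithTop.add_le_add_iff_left (w.ne_top_iff.2 hc)]

theorem map_mul_lt_map_mul_iff {c : L} (hc : c ≠ 0) (x y : L) :
    w (c * x) < w (c * y) ↔ w x < w y := by
  rw [w.map_mul, w.map_mul, WithTop.add_lt_add_iff_left (w.ne_top_iff.2 hc)]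

theorem map_le_iff_nonneg_inv_mul {c : L} (hc : c ≠ 0) (x : L) :
    w c ≤ w x ↔ 0 ≤ w (c⁻¹ * x) := by
  rw [← w.map_one, ← inv_mul_cancel₀ hc, w.map_mul_le_map_mul_iff (inv_ne_zero hc)]

theorem map_lt_iff_pos_inv_mul {c : L} (hc : c ≠ 0) (x : L) :
    w c < w x ↔ 0 < w (c⁻¹ * x) := by
  rw [← w.map_one, ← inv_mul_cancel₀ hc, w.map_mul_lt_map_mul_iff (inv_ne_zero hc)]

theorem map_inv_le_map_inv_iff {a b : L} (ha : a ≠ 0) (hb : b ≠ 0) :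
    w a⁻¹ ≤ w b⁻¹ ↔ w b ≤ w a := by
  rw [← w.map_mul_le_map_mul_iff (mul_ne_zero ha hb), mul_inv_cancel_right₀ hb,
    mul_comm a b, mul_inv_cancel_right₀ ha]

end AddValuation

section TailFilter

variable {α : Type*} [LinearOrder α] {a : α}

def tailFilter (a : α) : Filter α :=
  (atTop : Filter (Set.Iio a)).map (↑)

theorem eventually_tailFilter_iff (ha : (Set.Iio a).Nonempty) {p : α → Prop} :
    (∀ᶠ x in tailFilter a, p x) ↔ ∃ x₀, x₀ < a ∧ ∀ x, x₀ ≤ x → x < a → p x := by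
  have := ha.to_subtype
  rw [tailFilter, eventually_map, eventually_atTop]
  exact ⟨fun ⟨x₀, h⟩ => ⟨x₀, x₀.2, fun x hx hxa => h ⟨x, hxa⟩ hx⟩,
    fun ⟨x₀, hx₀, h⟩ => ⟨⟨x₀, hx₀⟩, fun x hx => h x hx x.2⟩⟩

theorem tailFilter_neBot (ha : (Set.Iio a).Nonempty) : (tailFilter a).NeBot :=
  have := ha.to_subtype
  map_neBot

theorem eventually_lt_tailFilter : ∀ᶠ x in tailFilter a, x < a :=
  eventually_map.2 (Eventually.of_forall Subtype.prop)

theorem tailFilter_le_cofinite (ha : Order.IsSuccPrelimit a) : tailFilter a ≤ cofinite :=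
  have := ha.noMaxOrder_Iio
  Subtype.val_injective.tendsto_cofinite.mono_left atTop_le_cofinite

end TailFilter

section LimitValuation

variable {K : Type u} [Field K] {Γ : Type*} [AddCommGroup Γ] [LinearOrder Γ]
  [IsOrderedAddMonoid Γ] {ι : Type*}

/-- The valuation `v_E` of `K(X)` whose valuation ring `V_E` and maximal ideal `M_E` consist of
the `ψ` with `v (ψ (z i)) ≥ 0`, resp. `> 0`, eventually along `F`. -/
structure IsLimitValuation (v : AddValuation K (WithTop Γ))
    (vE : AddValuation (RatFunc K) (WithTop Γ)) (F : Filter ι) (z : ι → K) : Prop where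
  map_C : ∀ c, vE (RatFunc.C c) = v c
  nonneg_iff : ∀ ψ, 0 ≤ vE ψ ↔ ∀ᶠ i in F, 0 ≤ v (ψ.eval (RingHom.id K) (z i))
  pos_iff : ∀ ψ, 0 < vE ψ ↔ ∀ᶠ i in F, 0 < v (ψ.eval (RingHom.id K) (z i))

namespace IsLimitValuation

variable {v : AddValuation K (WithTop Γ)} {vE : AddValuation (RatFunc K) (WithTop Γ)}
  {F : Filter ι} {z : ι → K}

theorem le_iff (hE : IsLimitValuation v vE F z) {c : K} (hc : c ≠ 0) (ψ : RatFunc K) :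
    v c ≤ vE ψ ↔ ∀ᶠ i in F, v c ≤ v (ψ.eval (RingHom.id K) (z i)) := by
  rw [← hE.map_C, vE.map_le_iff_nonneg_inv_mul ((map_ne_zero RatFunc.C).2 hc), hE.nonneg_iff]
  simp only [hE.map_C, ← map_inv₀, RatFunc.eval_C_mul, RingHom.id_apply,
    ← v.map_le_iff_nonneg_inv_mul hc]

theorem lt_iff (hE : IsLimitValuation v vE F z) {c : K} (hc : c ≠ 0) (ψ : RatFunc K) :
    v c < vE ψ ↔ ∀ᶠ i in F, v c < v (ψ.eval (RingHom.id K) (z i)) := by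
  rw [← hE.map_C, vE.map_lt_iff_pos_inv_mul ((map_ne_zero RatFunc.C).2 hc), hE.pos_iff]
  simp only [hE.map_C, ← map_inv₀, RatFunc.eval_C_mul, RingHom.id_apply,
    ← v.map_lt_iff_pos_inv_mul hc]

/-- Otherwise both `ψ` and `ψ⁻¹` would have positive value. -/
theorem not_eventually_eval_eq_zero (hE : IsLimitValuation v vE F z) {ψ : RatFunc K}
    (hψ : ψ ≠ 0) : ¬ ∀ᶠ i in F, ψ.eval (RingHom.id K) (z i) = 0 := by
  intro h
  have pos_of_eventually_zero : ∀ ψ' : RatFunc K,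
      (∀ᶠ i in F, ψ'.eval (RingHom.id K) (z i) = 0) → 0 < vE ψ' := fun ψ' h' =>
    (hE.pos_iff ψ').2 (h'.mono fun i hi => by simp [hi])
  have hpos := pos_of_eventually_zero ψ h
  have hpos_inv := pos_of_eventually_zero ψ⁻¹
    (h.mono fun i hi => by rw [RatFunc.eval_inv, hi, inv_zero])
  have hsum : vE ψ + vE ψ⁻¹ = 0 := by rw [← vE.map_mul, mul_inv_cancel₀ hψ, vE.map_one]
  exact (add_pos_of_pos_of_nonneg hpos hpos_inv.le).ne' hsum

theorem eq_of_eventually_eq [F.NeBot] (hE : IsLimitValuation v vE F z) {ψ : RatFunc K}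
    {β : WithTop Γ} (h : ∀ᶠ i in F, v (ψ.eval (RingHom.id K) (z i)) = β) : vE ψ = β := by
  by_cases hβ : β = ⊤
  · have hψ : ψ = 0 := not_not.1 fun hψ => hE.not_eventually_eval_eq_zero hψ
      (h.mono fun i hi => v.top_iff.1 (hi.trans hβ))
    rw [hψ, vE.map_zero, hβ]
  obtain ⟨i, hi⟩ := h.exists
  have hc : ψ.eval (RingHom.id K) (z i) ≠ 0 := v.ne_top_iff.1 (hi ▸ hβ)
  rw [← hi]
  refine le_antisymm (not_lt.1 fun hlt => ?_)
    ((hE.le_iff hc ψ).2 (h.mono fun j hj => (hj.trans hi.symm).ge))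
  obtain ⟨j, hlt_j, hj⟩ := (((hE.lt_iff hc ψ).1 hlt).and h).exists
  exact hlt_j.ne' (hj.trans hi.symm)

theorem eventually_eq_of_eq (hE : IsLimitValuation v vE F z) {ψ : RatFunc K} {c : K}
    (hc : c ≠ 0) (h : vE ψ = v c) (hnz : ∀ᶠ i in F, ψ.eval (RingHom.id K) (z i) ≠ 0) :
    ∀ᶠ i in F, v (ψ.eval (RingHom.id K) (z i)) = v c := by
  have hinv : vE ψ⁻¹ = v c⁻¹ := by rw [vE.map_inv, v.map_inv, h]
  filter_upwards [(hE.le_iff hc ψ).1 h.ge, (hE.le_iff (inv_ne_zero hc) ψ⁻¹).1 hinv.ge, hnz]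
    with i hle hle_inv hne
  rw [RatFunc.eval_inv, v.map_inv_le_map_inv_iff hc hne] at hle_inv
  exact le_antisymm hle_inv hle

theorem exists_eventually_eq_iff [F.NeBot] (hE : IsLimitValuation v vE F z) {ψ : RatFunc K}
    (hψ : ψ ≠ 0) (hnz : ∀ᶠ i in F, ψ.eval (RingHom.id K) (z i) ≠ 0) :
    (∃ β, ∀ᶠ i in F, v (ψ.eval (RingHom.id K) (z i)) = β) ↔ ∃ c, c ≠ 0 ∧ vE ψ = v c := by
  refine ⟨fun ⟨β, hβ⟩ => ?_, fun ⟨c, hc, h⟩ => ⟨v c, hE.eventually_eq_of_eq hc h hnz⟩⟩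
  obtain ⟨i, hi⟩ := hβ.exists
  refine ⟨ψ.eval (RingHom.id K) (z i), fun h0 => hψ ?_, by rw [hE.eq_of_eventually_eq hβ, hi]⟩
  rw [← vE.top_iff, hE.eq_of_eventually_eq hβ, ← hi, h0, v.map_zero]

end IsLimitValuation

end LimitValuation

section PseudoMonotone

variable {K : Type u} [Field K] {Γ : Type*} [AddCommGroup Γ] [LinearOrder Γ]
  [IsOrderedAddMonoid Γ]

def IsPseudoConvergent (v : AddValuation K (WithTop Γ)) (lam : Ordinal) (z : Ordinal → K) :
    Prop :=
  ∀ ν₁ ν₂ ν₃ : Ordinal, ν₁ < ν₂ → ν₂ < ν₃ → ν₃ < lam → v (z ν₁ - z ν₂) < v (z ν₂ - z ν₃)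

def IsPseudoDivergent (v : AddValuation K (WithTop Γ)) (lam : Ordinal) (z : Ordinal → K) :
    Prop :=
  ∀ ν₁ ν₂ ν₃ : Ordinal, ν₁ < ν₂ → ν₂ < ν₃ → ν₃ < lam → v (z ν₂ - z ν₃) < v (z ν₁ - z ν₂)

def IsPseudoStationary (v : AddValuation K (WithTop Γ)) (lam : Ordinal) (z : Ordinal → K) :
    Prop :=
  ∃ d : WithTop Γ, ∀ ν μ : Ordinal, ν < lam → μ < lam → ν ≠ μ → v (z ν - z μ) = d

def IsPseudoMonotone (v : AddValuation K (WithTop Γ)) (lam : Ordinal) (z : Ordinal → K) :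
    Prop :=
  IsPseudoConvergent v lam z ∨ IsPseudoDivergent v lam z ∨ IsPseudoStationary v lam z

variable {v : AddValuation K (WithTop Γ)} {lam : Ordinal} {z : Ordinal → K}

theorem IsPseudoMonotone.const_or_injOn (hlam : Order.IsSuccLimit lam)
    (hz : IsPseudoMonotone v lam z) :
    (∀ ν < lam, z ν = z 0) ∨ Set.InjOn z (Set.Ioo 0 lam) := by
  have top_of_eq : ∀ {a b}, z a = z b → v (z a - z b) = ⊤ := fun h => by
    rw [h, sub_self, v.map_zero]
  rcases hz with hz | hz | ⟨d, hd⟩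
  · refine .inr (Set.injOn_of_lt_imp_ne fun a _ b ⟨_, hb⟩ hab heq => ?_)
    exact not_top_lt (top_of_eq heq ▸ hz a b _ hab (Order.lt_succ b) (hlam.succ_lt hb))
  · refine .inr (Set.injOn_of_lt_imp_ne fun a ⟨ha, _⟩ b ⟨_, hb⟩ hab heq => ?_)
    exact not_top_lt (top_of_eq heq ▸ hz 0 a b ha hab hb)
  · by_cases hdt : d = ⊤
    · refine .inl fun ν hν => ?_
      rcases eq_or_ne ν 0 with rfl | hν0
      · rfl
      exact sub_eq_zero.1 (v.top_iff.1 ((hd ν 0 hν hlam.pos hν0).trans hdt))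
    · refine .inr (Set.injOn_of_lt_imp_ne fun a _ b ⟨_, hb⟩ hab heq => ?_)
      exact hdt ((hd a b (hab.trans hb) hb hab.ne).symm.trans (top_of_eq heq))

theorem IsLimitValuation.eventually_eval_ne_zero {vE : AddValuation (RatFunc K) (WithTop Γ)}
    (hE : IsLimitValuation v vE (tailFilter lam) z) (hlam : Order.IsSuccLimit lam)
    (hz : IsPseudoMonotone v lam z) {ψ : RatFunc K} (hψ : ψ ≠ 0) :
    ∀ᶠ ν in tailFilter lam, ψ.eval (RingHom.id K) (z ν) ≠ 0 := by
  rcases hz.const_or_injOn hlam with hconst | hinj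
  · have hzconst : ∀ᶠ ν in tailFilter lam, z ν = z 0 := eventually_lt_tailFilter.mono hconst
    have h0 : ψ.eval (RingHom.id K) (z 0) ≠ 0 := fun h0 =>
      hE.not_eventually_eval_eq_zero hψ (hzconst.mono fun ν hν => by rw [hν, h0])
    exact hzconst.mono fun ν hν => by rwa [hν]
  · set S := Set.Ioo 0 lam ∩ z ⁻¹' {a | ψ.eval (RingHom.id K) a = 0}
    have hS : S.Finite := Set.Finite.of_finite_image
      ((RatFunc.finite_setOf_eval_eq_zero hψ).subset (Set.image_subset_iff.2 fun _ h => h.2))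
      (hinj.mono Set.inter_subset_left)
    filter_upwards [tailFilter_le_cofinite hlam.isSuccPrelimit hS.compl_mem_cofinite,
      eventually_lt_tailFilter, (eventually_cofinite_ne 0).filter_mono
        (tailFilter_le_cofinite hlam.isSuccPrelimit)] with ν hνS hνlam hν0 h0
    exact hνS ⟨⟨pos_iff_ne_zero.2 hν0, hνlam⟩, h0⟩

end PseudoMonotone

/-- for the valuation `v_E` on `K(X)` induced by a pseudo monotone
sequence `E` (characterized by `v_E(φ) ≥ 0` resp. `> 0` iff `v(φ(z_ν)) ≥ 0` resp. `> 0`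
ultimately, and extending `v`), the sequence `{v(φ(z_ν))}` is ultimately constant iff
`v_E(φ) ∈ v(K^×)`, and in that case `v_E(φ)` equals the ultimate constant value. -/
theorem stmt12 {K : Type*} [Field K] {Γ : Type*} [AddCommGroup Γ] [LinearOrder Γ] [IsOrderedAddMonoid Γ]
    (v : AddValuation K (WithTop Γ)) (lam : Ordinal) (hlam : Order.IsSuccLimit lam)
    (z : Ordinal → K)
    (hpm :
      (∀ ν₁ ν₂ ν₃ : Ordinal, ν₁ < ν₂ → ν₂ < ν₃ → ν₃ < lam →
        v (z ν₁ - z ν₂) < v (z ν₂ - z ν₃)) ∨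
      (∀ ν₁ ν₂ ν₃ : Ordinal, ν₁ < ν₂ → ν₂ < ν₃ → ν₃ < lam →
        v (z ν₂ - z ν₃) < v (z ν₁ - z ν₂)) ∨
      (∃ d : WithTop Γ, ∀ ν μ : Ordinal, ν < lam → μ < lam → ν ≠ μ →
        v (z ν - z μ) = d))
    (vE : AddValuation (RatFunc K) (WithTop Γ))
    (hvEC : ∀ c : K, vE (RatFunc.C c) = v c)
    (hvE0 : ∀ φ : RatFunc K, 0 ≤ vE φ ↔
      ∃ ν₀, ν₀ < lam ∧ ∀ ν, ν₀ ≤ ν → ν < lam → 0 ≤ v (φ.eval (RingHom.id K) (z ν)))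
    (hvE1 : ∀ φ : RatFunc K, 0 < vE φ ↔
      ∃ ν₀, ν₀ < lam ∧ ∀ ν, ν₀ ≤ ν → ν < lam → 0 < v (φ.eval (RingHom.id K) (z ν)))
    (φ : RatFunc K) (hφ : φ ≠ 0) :
    ((∃ β : WithTop Γ, ∃ ν₀, ν₀ < lam ∧ ∀ ν, ν₀ ≤ ν → ν < lam →
        v (φ.eval (RingHom.id K) (z ν)) = β) ↔
      ∃ c : K, c ≠ 0 ∧ vE φ = v c) ∧
    (∀ β : WithTop Γ, (∃ ν₀, ν₀ < lam ∧ ∀ ν, ν₀ ≤ ν → ν < lam →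
        v (φ.eval (RingHom.id K) (z ν)) = β) → vE φ = β) := by
  have hIio := hlam.nonempty_Iio
  have := tailFilter_neBot hIio
  have hE : IsLimitValuation v vE (tailFilter lam) z :=
    ⟨hvEC, fun ψ => (hvE0 ψ).trans (eventually_tailFilter_iff hIio).symm,
      fun ψ => (hvE1 ψ).trans (eventually_tailFilter_iff hIio).symm⟩
  simp only [← eventually_tailFilter_iff hIio]
  exact ⟨hE.exists_eventually_eq_iff hφ (hE.eventually_eval_ne_zero hlam hpm hφ),
    fun _ => hE.eq_of_eventually_eq⟩
end

section
/- Let E = {z_ν}_{ν<λ} be a pseudo convergent sequence in (K,v) and v_E the induced valuation on K(X) (v_E(φ) ≥ 0 iff v(φ(z_ν)) ≥ 0 ultimately). Then the sequence {v_E(X - z_ν)}_{ν<λ} is strictly increasing; in particular, X is a limit of E in (K(X), v_E). -/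
/-!
Write `δ ν = v (z ν - z (ν + 1))`. Pseudo convergence gives `v (z ρ - z ν) = δ ν` for all
`ρ > ν`, and `δ` is strictly increasing. Evaluating `(X - z ν) / (z ν - z (ν + 1))` at `z ρ`,
`ρ > ν`, shows that `v_E (X - z ν) ≥ δ ν`. Applied to `ν + 1` this gives
`v_E (X - z (ν + 1)) ≥ δ (ν + 1) > δ ν = v (z (ν + 1) - z ν)`, so the ultrametric equality in
`X - z ν = (X - z (ν + 1)) + (z (ν + 1) - z ν)` yields `v_E (X - z ν) = δ ν`.
-/

open Order RatFunc

namespace AddValuation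

variable {K : Type*} [Field K] {Γ₀ : Type*} [LinearOrderedAddCommMonoidWithTop Γ₀]
  {ι : Type*} [LinearOrder ι]

def IsPseudoConvergent (v : AddValuation K Γ₀) (z : ι → K) (lam : ι) : Prop :=
  ∀ ν₁ ν₂ ν₃, ν₁ < ν₂ → ν₂ < ν₃ → ν₃ < lam → v (z ν₁ - z ν₂) < v (z ν₂ - z ν₃)

theorem le_valuation_X_sub_C {v : AddValuation K Γ₀} {vE : AddValuation (RatFunc K) Γ₀}
    {z : ι → K} {lam : ι} (hvEC : ∀ c : K, vE (C c) = v c)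
    (hvE0 : ∀ φ : RatFunc K, (∃ ν₀, ν₀ < lam ∧ ∀ ν, ν₀ ≤ ν → ν < lam →
      0 ≤ v (φ.eval (RingHom.id K) (z ν))) → 0 ≤ vE φ)
    {a c : K} (hc : c ≠ 0)
    (hle : ∃ ν₀, ν₀ < lam ∧ ∀ ν, ν₀ ≤ ν → ν < lam → v c ≤ v (z ν - a)) :
    v c ≤ vE (X - C a) := by
  set ψ : RatFunc K := (X - C a) * C c⁻¹
  have hψ : 0 ≤ vE ψ := by
    refine hvE0 ψ ?_
    obtain ⟨ν₀, hν₀, hν⟩ := hle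
    refine ⟨ν₀, hν₀, fun ν h₁ h₂ => ?_⟩
    have heval : ψ.eval (RingHom.id K) (z ν) = (z ν - a) * c⁻¹ := by
      rw [show ψ = algebraMap (Polynomial K) (RatFunc K) ((Polynomial.X - Polynomial.C a) *
        Polynomial.C c⁻¹) by simp [ψ, algebraMap_X, algebraMap_C], eval_algebraMap]
      simp
    calc (0 : Γ₀) = v c + v c⁻¹ := by rw [← v.map_mul, mul_inv_cancel₀ hc, v.map_one]
      _ ≤ v (z ν - a) + v c⁻¹ := add_le_add_left (hν ν h₁ h₂) _
      _ = v (ψ.eval (RingHom.id K) (z ν)) := by rw [heval, v.map_mul]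
  have hfactor : X - C a = ψ * C c := by
    rw [mul_assoc, ← C.map_mul, inv_mul_cancel₀ hc, C.map_one, mul_one]
  calc v c = 0 + vE (C c) := by rw [zero_add, hvEC]
    _ ≤ vE ψ + vE (C c) := add_le_add_left hψ _
    _ = vE (X - C a) := by rw [← vE.map_mul, ← hfactor]

namespace IsPseudoConvergent

variable [SuccOrder ι] {v : AddValuation K Γ₀} {z : ι → K} {lam : ι}

theorem valuation_sub_eq (hz : v.IsPseudoConvergent z lam) {ν ρ : ι} (hνρ : ν < ρ)
    (hρ : ρ < lam) : v (z ν - z ρ) = v (z ν - z (succ ν)) := by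
  rcases (succ_le_of_lt hνρ).eq_or_lt with h | h
  · rw [h]
  · have hlt := hz ν (succ ν) ρ (lt_succ_of_not_isMax hνρ.not_isMax) h hρ
    rw [show z ν - z ρ = (z ν - z (succ ν)) + (z (succ ν) - z ρ) by ring,
      v.map_add_eq_of_lt_left hlt]

theorem valuation_sub_succ_lt (hz : v.IsPseudoConvergent z lam) (hlam : IsSuccLimit lam)
    {ν μ : ι} (hνμ : ν < μ) (hμ : μ < lam) :
    v (z ν - z (succ ν)) < v (z μ - z (succ μ)) :=
  hz.valuation_sub_eq hνμ hμ ▸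
    hz ν μ (succ μ) hνμ (lt_succ_of_not_isMax hμ.not_isMax) (hlam.succ_lt hμ)

theorem sub_succ_ne_zero (hz : v.IsPseudoConvergent z lam) (hlam : IsSuccLimit lam)
    {ν : ι} (hν : ν < lam) : z ν - z (succ ν) ≠ 0 := by
  intro h
  have hlt := hz.valuation_sub_succ_lt hlam (lt_succ_of_not_isMax hν.not_isMax)
    (hlam.succ_lt hν)
  rw [h, v.map_zero] at hlt
  exact not_top_lt hlt

theorem valuation_X_sub_C_eq (hz : v.IsPseudoConvergent z lam) (hlam : IsSuccLimit lam)
    {vE : AddValuation (RatFunc K) Γ₀} (hvEC : ∀ c : K, vE (C c) = v c)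
    (hvE0 : ∀ φ : RatFunc K, (∃ ν₀, ν₀ < lam ∧ ∀ ν, ν₀ ≤ ν → ν < lam →
      0 ≤ v (φ.eval (RingHom.id K) (z ν))) → 0 ≤ vE φ)
    {ν : ι} (hν : ν < lam) : vE (X - C (z ν)) = v (z ν - z (succ ν)) := by
  have hlower : ∀ μ, μ < lam → v (z μ - z (succ μ)) ≤ vE (X - C (z μ)) := by
    intro μ hμ
    refine le_valuation_X_sub_C hvEC hvE0 (hz.sub_succ_ne_zero hlam hμ)
      ⟨succ μ, hlam.succ_lt hμ, fun ρ hρ hρlam => ?_⟩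
    rw [v.map_sub_swap (z ρ), hz.valuation_sub_eq ((lt_succ_of_not_isMax hμ.not_isMax).trans_le hρ)
      hρlam]
  have hsucc : succ ν < lam := hlam.succ_lt hν
  have hlt : vE (C (z (succ ν) - z ν)) < vE (X - C (z (succ ν))) := by
    rw [hvEC, v.map_sub_swap]
    exact (hz.valuation_sub_succ_lt hlam (lt_succ_of_not_isMax hν.not_isMax) hsucc).trans_le
      (hlower _ hsucc)
  rw [show X - C (z ν) = (X - C (z (succ ν))) + C (z (succ ν) - z ν) by simp,
    vE.map_add_eq_of_lt_right hlt, hvEC, v.map_sub_swap]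

end IsPseudoConvergent

end AddValuation

theorem stmt13_general {K : Type*} [Field K] {Γ : Type*} [AddCommGroup Γ] [LinearOrder Γ] [IsOrderedAddMonoid Γ]
    (v : AddValuation K (WithTop Γ)) (lam : Ordinal) (hlam : Order.IsSuccLimit lam)
    (z : Ordinal → K)
    (hpcs : ∀ ν₁ ν₂ ν₃ : Ordinal, ν₁ < ν₂ → ν₂ < ν₃ → ν₃ < lam →
      v (z ν₁ - z ν₂) < v (z ν₂ - z ν₃))
    (vE : AddValuation (RatFunc K) (WithTop Γ))
    (hvEC : ∀ c : K, vE (RatFunc.C c) = v c)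
    (hvE0 : ∀ φ : RatFunc K, 0 ≤ vE φ ↔
      ∃ ν₀, ν₀ < lam ∧ ∀ ν, ν₀ ≤ ν → ν < lam → 0 ≤ v (φ.eval (RingHom.id K) (z ν))) :
    (∀ ν μ : Ordinal, ν < μ → μ < lam →
      vE (RatFunc.X - RatFunc.C (z ν)) < vE (RatFunc.X - RatFunc.C (z μ))) ∧
    (∃ ν₀, ν₀ < lam ∧ ∀ ν, ν₀ ≤ ν → ν < lam →
      vE (RatFunc.X - RatFunc.C (z ν)) = v (z ν - z (ν + 1))) := by
  have hz : v.IsPseudoConvergent z lam := hpcs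
  have hval : ∀ ν, ν < lam → vE (X - C (z ν)) = v (z ν - z (succ ν)) := fun ν hν =>
    hz.valuation_X_sub_C_eq hlam hvEC (fun φ => (hvE0 φ).2) hν
  simp only [← Order.succ_eq_add_one]
  refine ⟨fun ν μ hνμ hμ => ?_, 0, hlam.pos, fun ν _ hν => hval ν hν⟩
  rw [hval ν (hνμ.trans hμ), hval μ hμ]
  exact hz.valuation_sub_succ_lt hlam hνμ hμ

/-- for a pseudo convergent sequence `E` and the induced valuation `v_E`
on `K(X)`, the sequence `{v_E(X - z_ν)}` is strictly increasing; in particular `X` is a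
limit of `E` with respect to `v_E`. -/
theorem stmt13 {K : Type*} [Field K] {Γ : Type*} [AddCommGroup Γ] [LinearOrder Γ] [IsOrderedAddMonoid Γ]
    (v : AddValuation K (WithTop Γ)) (lam : Ordinal) (hlam : Order.IsSuccLimit lam)
    (z : Ordinal → K)
    (hpcs : ∀ ν₁ ν₂ ν₃ : Ordinal, ν₁ < ν₂ → ν₂ < ν₃ → ν₃ < lam →
      v (z ν₁ - z ν₂) < v (z ν₂ - z ν₃))
    (vE : AddValuation (RatFunc K) (WithTop Γ))
    (hvEC : ∀ c : K, vE (RatFunc.C c) = v c)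
    (hvE0 : ∀ φ : RatFunc K, 0 ≤ vE φ ↔
      ∃ ν₀, ν₀ < lam ∧ ∀ ν, ν₀ ≤ ν → ν < lam → 0 ≤ v (φ.eval (RingHom.id K) (z ν)))
    (hvE1 : ∀ φ : RatFunc K, 0 < vE φ ↔
      ∃ ν₀, ν₀ < lam ∧ ∀ ν, ν₀ ≤ ν → ν < lam → 0 < v (φ.eval (RingHom.id K) (z ν))) :
    (∀ ν μ : Ordinal, ν < μ → μ < lam →
      vE (RatFunc.X - RatFunc.C (z ν)) < vE (RatFunc.X - RatFunc.C (z μ))) ∧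
    (∃ ν₀, ν₀ < lam ∧ ∀ ν, ν₀ ≤ ν → ν < lam →
      vE (RatFunc.X - RatFunc.C (z ν)) = v (z ν - z (ν + 1))) :=
  stmt13_general v lam hlam z hpcs vE hvEC hvE0
end

section
/- Let (K,v) be a valued field, v̄ an extension to K̄, and E a pseudo convergent or pseudo divergent sequence in (K,v). If a, b ∈ K̄ are two distinct limits of E and α := v̄_E(X - a) ∉ v̄(K̄^×) (the value of X - a under a common extension v̄_E of v̄ and v_E to K̄(X) is not in the value group of K̄), then v̄_E(X - a) = v̄_E(X - b) = α and v̄(a - b) > α. -/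
/-! For a limit `x` of `E` and `c ≠ 0`, `v̄_E(X - x) > v̄(c)` iff `v̄_E((X - x)/c) > 0`, i.e. iff
eventually `v̄(z_ν - x) = δ_ν > v̄(c)`. This condition does not depend on the limit, so
`v̄(a - b)` lies below `v̄_E(X - a)` exactly when it lies below `v̄_E(X - b)`. As
`(X - a) - (X - b) = b - a` and `v̄(a - b) ≠ α`, the ultrametric inequality then forces
`v̄_E(X - b) = α < v̄(a - b)`. -/

def EventuallyBelow {ι : Type*} [LinearOrder ι] (lam : ι) (P : ι → Prop) : Prop :=
  ∃ ν₀, ν₀ < lam ∧ ∀ ν, ν₀ ≤ ν → ν < lam → P ν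

namespace EventuallyBelow

variable {ι : Type*} [LinearOrder ι] {lam : ι} {P Q : ι → Prop}

theorem and (hP : EventuallyBelow lam P) (hQ : EventuallyBelow lam Q) :
    EventuallyBelow lam fun ν => P ν ∧ Q ν := by
  obtain ⟨μ, hμ, hPμ⟩ := hP
  obtain ⟨ρ, hρ, hQρ⟩ := hQ
  exact ⟨max μ ρ, max_lt hμ hρ, fun ν hν hνl =>
    ⟨hPμ ν (le_of_max_le_left hν) hνl, hQρ ν (le_of_max_le_right hν) hνl⟩⟩

theorem mono (hP : EventuallyBelow lam P) (h : ∀ ν, P ν → Q ν) : EventuallyBelow lam Q :=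
  let ⟨μ, hμ, hPμ⟩ := hP
  ⟨μ, hμ, fun ν hν hνl => h ν (hPμ ν hν hνl)⟩

theorem congr (h : EventuallyBelow lam fun ν => P ν ↔ Q ν) :
    EventuallyBelow lam P ↔ EventuallyBelow lam Q :=
  ⟨fun hP => (h.and hP).mono fun _ h => h.1.mp h.2,
    fun hQ => (h.and hQ).mono fun _ h => h.1.mpr h.2⟩

end EventuallyBelow

namespace AddValuation

variable {L : Type*} [Field L] {Γ : Type*} [AddCommGroup Γ] [LinearOrder Γ]
  [IsOrderedAddMonoid Γ] (w : AddValuation L (WithTop Γ))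

theorem lt_map_iff_pos_map_div {y c : L} (hc : c ≠ 0) : w c < w y ↔ 0 < w (y / c) := by
  conv_lhs => rw [← div_mul_cancel₀ y hc, w.map_mul]
  rw [← WithTop.add_lt_add_iff_right (w.ne_top_iff.mpr hc) (x := 0), zero_add]

theorem map_eq_and_lt_map_sub {x y : L} (hne : w (x - y) ≠ w x)
    (hiff : w (x - y) < w x ↔ w (x - y) < w y) : w y = w x ∧ w x < w (x - y) := by
  have hyx : w y = w x := by
    rcases lt_trichotomy (w y) (w x) with hlt | heq | hgt
    · have hsub : w (x - y) = w y := w.map_sub_eq_of_lt_right hlt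
      exact absurd (hiff.mp (hsub ▸ hlt)) (hsub ▸ lt_irrefl _)
    · exact heq
    · exact absurd (w.map_sub_eq_of_lt_left hgt) hne
  refine ⟨hyx, lt_of_le_of_ne ?_ hne.symm⟩
  simpa [hyx] using w.map_sub x y

end AddValuation

open RatFunc in
theorem lt_map_X_sub_C_iff {F : Type*} [Field F] {Γ : Type*} [AddCommGroup Γ] [LinearOrder Γ]
    [IsOrderedAddMonoid Γ] {ι : Type*} [LinearOrder ι]
    (v : AddValuation F (WithTop Γ)) (vE : AddValuation (RatFunc F) (WithTop Γ))
    (lam : ι) (z : ι → F) (δ : ι → WithTop Γ)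
    (hvEC : ∀ c : F, vE (C c) = v c)
    (hvE1 : ∀ φ : RatFunc F, 0 < vE φ ↔
      EventuallyBelow lam fun ν => 0 < v (φ.eval (RingHom.id F) (z ν)))
    {x : F} (hx : EventuallyBelow lam fun ν => v (x - z ν) = δ ν) {c : F} (hc : c ≠ 0) :
    v c < vE (X - C x) ↔ EventuallyBelow lam fun ν => v c < δ ν := by
  have heval : ∀ t, ((X - C x) / C c : RatFunc F).eval (RingHom.id F) t = (t - x) / c := by
    intro t
    have : (X - C x) / C c = algebraMap (Polynomial F) (RatFunc F)
        (Polynomial.C c⁻¹ * (Polynomial.X - Polynomial.C x)) := by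
      simp [div_eq_inv_mul]
    rw [this, eval_algebraMap]
    simp [div_eq_inv_mul]
  conv_lhs => rw [← hvEC c]
  rw [vE.lt_map_iff_pos_map_div ((map_ne_zero C).mpr hc), hvE1]
  refine EventuallyBelow.congr (hx.mono fun ν hν => ?_)
  rw [heval, ← v.lt_map_iff_pos_map_div hc, v.map_sub_swap, hν]

theorem stmt17_general {F : Type*} [Field F]
    {Γ : Type*} [AddCommGroup Γ] [LinearOrder Γ] [IsOrderedAddMonoid Γ]
    (v : AddValuation F (WithTop Γ))
    (lam : Ordinal) (z : Ordinal → F)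
    (δ : Ordinal → WithTop Γ)
    (vE : AddValuation (RatFunc F) (WithTop Γ))
    (hvEC : ∀ c : F, vE (RatFunc.C c) = v c)
    (hvE1 : ∀ φ : RatFunc F, 0 < vE φ ↔
      ∃ ν₀, ν₀ < lam ∧ ∀ ν, ν₀ ≤ ν → ν < lam → 0 < v (φ.eval (RingHom.id F) (z ν)))
    (a b : F) (hab : a ≠ b)
    (hla : ∃ ν₀, ν₀ < lam ∧ ∀ ν, ν₀ ≤ ν → ν < lam → v (a - z ν) = δ ν)
    (hlb : ∃ ν₀, ν₀ < lam ∧ ∀ ν, ν₀ ≤ ν → ν < lam → v (b - z ν) = δ ν)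
    (hα : ∀ c : F, c ≠ 0 → vE (RatFunc.X - RatFunc.C a) ≠ v c) :
    vE (RatFunc.X - RatFunc.C b) = vE (RatFunc.X - RatFunc.C a) ∧
    vE (RatFunc.X - RatFunc.C a) < v (a - b) := by
  have hc : a - b ≠ 0 := sub_ne_zero.mpr hab
  have hdiff : vE ((RatFunc.X - RatFunc.C a) - (RatFunc.X - RatFunc.C b)) = v (a - b) := by
    rw [sub_sub_sub_cancel_left, ← map_sub, hvEC, v.map_sub_swap]
  rw [← hdiff]
  refine vE.map_eq_and_lt_map_sub (hdiff ▸ (hα _ hc).symm) ?_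
  rw [hdiff, lt_map_X_sub_C_iff v vE lam z δ hvEC hvE1 hla hc,
    lt_map_X_sub_C_iff v vE lam z δ hvEC hvE1 hlb hc]

/-- if `a ≠ b` are two limits in `K̄` of a pcs or pds `E` and
`α := v̄_E(X - a)` is not in the value group of `K̄`, then
`v̄_E(X - a) = v̄_E(X - b) = α` and `v̄(a - b) > α`. Here `v̄_E` is the valuation on
`K̄(X)` induced by `E`, characterized by its positivity/nonnegativity on ultimate
values and extending `v̄`. -/
theorem stmt17 {F : Type*} [Field F] [IsAlgClosed F]
    {Γ : Type*} [AddCommGroup Γ] [LinearOrder Γ] [IsOrderedAddMonoid Γ]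
    (v : AddValuation F (WithTop Γ)) (K : Subfield F)
    (lam : Ordinal) (hlam : Order.IsSuccLimit lam) (z : Ordinal → F)
    (hzK : ∀ ν : Ordinal, ν < lam → z ν ∈ K)
    (δ : Ordinal → WithTop Γ)
    (hrep : ∀ ν μ : Ordinal, ν < μ → μ < lam → v (z ν - z μ) = min (δ ν) (δ μ))
    (hmono : (∀ ν μ : Ordinal, ν < μ → μ < lam → δ ν < δ μ) ∨
             (∀ ν μ : Ordinal, ν < μ → μ < lam → δ μ < δ ν))
    (vE : AddValuation (RatFunc F) (WithTop Γ))
    (hvEC : ∀ c : F, vE (RatFunc.C c) = v c)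
    (hvE0 : ∀ φ : RatFunc F, 0 ≤ vE φ ↔
      ∃ ν₀, ν₀ < lam ∧ ∀ ν, ν₀ ≤ ν → ν < lam → 0 ≤ v (φ.eval (RingHom.id F) (z ν)))
    (hvE1 : ∀ φ : RatFunc F, 0 < vE φ ↔
      ∃ ν₀, ν₀ < lam ∧ ∀ ν, ν₀ ≤ ν → ν < lam → 0 < v (φ.eval (RingHom.id F) (z ν)))
    (a b : F) (hab : a ≠ b)
    (hla : ∃ ν₀, ν₀ < lam ∧ ∀ ν, ν₀ ≤ ν → ν < lam → v (a - z ν) = δ ν)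
    (hlb : ∃ ν₀, ν₀ < lam ∧ ∀ ν, ν₀ ≤ ν → ν < lam → v (b - z ν) = δ ν)
    (hα : ∀ c : F, c ≠ 0 → vE (RatFunc.X - RatFunc.C a) ≠ v c) :
    vE (RatFunc.X - RatFunc.C b) = vE (RatFunc.X - RatFunc.C a) ∧
    vE (RatFunc.X - RatFunc.C a) < v (a - b) :=
  stmt17_general v lam z δ vE hvEC hvE1 a b hab hla hlb hα
end
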